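/- The groups G = ⟨x₁, x₂, x₃ | x₁x₂x₁⁻¹x₂⁻¹x₁x₂, x₃x₂x₃⁻¹x₂⁻¹x₃x₂⟩ and G' = ⟨x₁, x₂, x₃ | x₁x₂x₁⁻¹x₂⁻¹x₁x₂, x₃x₂⁻¹x₃⁻¹x₂x₃x₂⁻¹⟩ are not isomorphic. -/

import Mathlib

/-- Relators r₁ = x₁x₂x₁⁻¹x₂⁻¹x₁x₂ and r₂ = x₃x₂x₃⁻¹x₂⁻¹x₃x₂,
where `0 = x₁`, `1 = x₂`, `2 = x₃`. -/
def relsG : Set (FreeGroup (Fin 3)) :=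
  { FreeGroup.of 0 * FreeGroup.of 1 * (FreeGroup.of 0)⁻¹ * (FreeGroup.of 1)⁻¹ *
      FreeGroup.of 0 * FreeGroup.of 1,
    FreeGroup.of 2 * FreeGroup.of 1 * (FreeGroup.of 2)⁻¹ * (FreeGroup.of 1)⁻¹ *
      FreeGroup.of 2 * FreeGroup.of 1 }

/-- Relators r₁ = x₁x₂x₁⁻¹x₂⁻¹x₁x₂ and r₃ = x₃x₂⁻¹x₃⁻¹x₂x₃x₂⁻¹. -/
def relsG' : Set (FreeGroup (Fin 3)) :=
  { FreeGroup.of 0 * FreeGroup.of 1 * (FreeGroup.of 0)⁻¹ * (FreeGroup.of 1)⁻¹ *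
      FreeGroup.of 0 * FreeGroup.of 1,
    FreeGroup.of 2 * (FreeGroup.of 1)⁻¹ * (FreeGroup.of 2)⁻¹ * FreeGroup.of 1 *
      FreeGroup.of 2 * (FreeGroup.of 1)⁻¹ }

/-- G = ⟨x₁, x₂, x₃ | r₁, r₂⟩. -/
def GroupG : Type := PresentedGroup relsG

/-- G' = ⟨x₁, x₂, x₃ | r₁, r₃⟩. -/
def GroupG' : Type := PresentedGroup relsG'

instance : Group GroupG := by unfold GroupG; infer_instance
instance : Group GroupG' := by unfold GroupG'; infer_instance

/-!
Isomorphic groups have equally many homomorphisms to a fixed finite group. Into the Frobenius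
group `F₂₀ = ℤ/5 ⋊ (ℤ/5)ˣ` there are 140 homomorphisms from `G` but only 60 from `G'`. This
reflects the Alexander polynomials: a representation onto `ℤ/5 ⋊ ⟨u⟩` corresponds to a root
`t = u` of the Alexander polynomial mod 5, and `(2 - t⁻¹)²` has the double root `3`, while
`(2 - t⁻¹)(2 - t)` has the two simple roots `3` and `2`.
-/

namespace PresentedGroup

variable {α : Type*} (rels : Set (FreeGroup α)) (K : Type*) [Group K]

def homEquiv :
    (PresentedGroup rels →* K) ≃ {f : α → K // ∀ r ∈ rels, FreeGroup.lift f r = 1} where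
  toFun φ := ⟨fun a => φ (of a), fun r hr => by
    rw [← FreeGroup.lift_unique (f := fun a => φ (of a)) (φ.comp (mk rels)) fun _ => rfl,
      MonoidHom.comp_apply, one_of_mem hr, map_one]⟩
  invFun f := toGroup f.2
  left_inv φ := ext fun _ => toGroup.of _
  right_inv f := Subtype.ext <| funext fun _ => toGroup.of _

end PresentedGroup

theorem Nat.card_fin_three_subtype_eq_sum {K : Type*} [Fintype K] (P Q : K → K → Prop) :
    Nat.card {f : Fin 3 → K // P (f 0) (f 1) ∧ Q (f 2) (f 1)} =
      ∑ b, Nat.card {a // P a b} * Nat.card {c // Q c b} := by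
  let e : {f : Fin 3 → K // P (f 0) (f 1) ∧ Q (f 2) (f 1)} ≃ Σ b, {a // P a b} × {c // Q c b} :=
    { toFun f := ⟨f.1 1, ⟨f.1 0, f.2.1⟩, ⟨f.1 2, f.2.2⟩⟩
      invFun x := ⟨![x.2.1, x.1, x.2.2], x.2.1.2, x.2.2.2⟩
      left_inv f := Subtype.ext <| funext fun i => by fin_cases i <;> rfl
      right_inv _ := rfl }
  simp only [Nat.card_congr e, Nat.card_sigma, Nat.card_prod]

instance {N G : Type*} [Group N] [Group G] {φ : G →* MulAut N} [Fintype N] [Fintype G] :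
    Fintype (N ⋊[φ] G) :=
  Fintype.ofEquiv _ SemidirectProduct.equivProd.symm

/-- `⟨a, u⟩` is the affine map `x ↦ a + u x`; for `R = ZMod 5` this is the Frobenius group
`F₂₀`. -/
abbrev AffineGroup (R : Type*) [CommRing R] : Type _ :=
  Multiplicative R ⋊[(MulAutMultiplicative R).symm.toMonoidHom.comp
    (DistribMulAction.toAddAut Rˣ R)] Rˣ

section Relators

variable {K : Type*} [Group K]

def relWord (a b : K) : K := a * b * a⁻¹ * b⁻¹ * a * b

theorem forall_relsG_iff (f : Fin 3 → K) : (∀ r ∈ relsG, FreeGroup.lift f r = 1) ↔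
    relWord (f 0) (f 1) = 1 ∧ relWord (f 2) (f 1) = 1 := by
  simp [relsG, relWord]

theorem forall_relsG'_iff (f : Fin 3 → K) : (∀ r ∈ relsG', FreeGroup.lift f r = 1) ↔
    relWord (f 0) (f 1) = 1 ∧ relWord (f 2) (f 1)⁻¹ = 1 := by
  simp [relsG', relWord]

end Relators

theorem card_monoidHom_groupG : Nat.card (GroupG →* AffineGroup (ZMod 5)) = 140 := by
  refine (Nat.card_congr ((PresentedGroup.homEquiv relsG _).trans
    (Equiv.subtypeEquivRight forall_relsG_iff))).trans ?_
  rw [Nat.card_fin_three_subtype_eq_sum (fun a b => relWord a b = 1) fun c b => relWord c b = 1]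
  simp only [Nat.card_eq_fintype_card]
  decide +kernel

theorem card_monoidHom_groupG' : Nat.card (GroupG' →* AffineGroup (ZMod 5)) = 60 := by
  refine (Nat.card_congr ((PresentedGroup.homEquiv relsG' _).trans
    (Equiv.subtypeEquivRight forall_relsG'_iff))).trans ?_
  rw [Nat.card_fin_three_subtype_eq_sum (fun a b => relWord a b = 1)
    fun c b => relWord c b⁻¹ = 1]
  simp only [Nat.card_eq_fintype_card]
  decide +kernel

theorem G_not_iso_G' : ¬ Nonempty (GroupG ≃* GroupG') := by
  rintro ⟨e⟩
  have := Nat.card_congr (e.monoidHomCongrLeftEquiv (N := AffineGroup (ZMod 5)))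
  rw [card_monoidHom_groupG, card_monoidHom_groupG'] at this
  omega
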